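/- Monotonicity of the full-fill trajectory and total profit in the initial reputation: Fix an advertisement sequence A : {1,…,N} → {L,H}. If 0 ≤ R_1 ≤ R̂_1 ≤ 1, then the full-fill trajectories started at R_1 and R̂_1 satisfy R_i ≤ R̂_i, R'_i ≤ R̂'_i, and D(R'_i) ≤ D(R̂'_i) for every i = 1,…,N; consequently Π(A, R_1) ≤ Π(A, R̂_1). -/

import Mathlib

noncomputable section

/-- Post-advertisement reputation map. -/
def frep (α R a : ℝ) : ℝ := R + (1 - R) * a ^ α

/-- Demand function. -/
def dem (Λ q x : ℝ) : ℝ := if 0 < x then max 0 (Λ * (1 - q / x)) else 0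

/-- Full-fill reputation trajectory (0-indexed periods). -/
def rep (α w Λ q : ℝ) (A : ℕ → ℝ) (R1 : ℝ) : ℕ → ℝ
  | 0 => R1
  | i + 1 =>
      let R' := frep α (rep α w Λ q A R1 i) (A i)
      if 0 < dem Λ q R' then (1 - w) * R' + w else R'

/-- Full-fill total profit over horizon `N`. -/
def profit (α w Λ q p c cA : ℝ) (A : ℕ → ℝ) (R1 : ℝ) (N : ℕ) : ℝ :=
  ∑ i ∈ Finset.range N,
    ((p - c) * dem Λ q (frep α (rep α w Λ q A R1 i) (A i)) - cA * A i)

/-! Monotonicity survives each stage of a period because every reputation stays in `(-∞, 1]`: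
the only non-monotone effect, selling (and so moving towards `1`) from the higher reputation
but not from the lower one, can then only widen the gap. -/

lemma dem_nonneg (Λ q x : ℝ) : 0 ≤ dem Λ q x := by
  unfold dem
  split_ifs
  exacts [le_max_left _ _, le_rfl]

lemma dem_monotone {Λ q : ℝ} (hΛ : 0 ≤ Λ) (hq : 0 ≤ q) : Monotone (dem Λ q) := by
  intro x y hxy
  unfold dem
  by_cases hx : 0 < x
  · rw [if_pos hx, if_pos (hx.trans_le hxy)]
    gcongr
  · rw [if_neg hx]
    exact dem_nonneg Λ q y

section frep

variable {α a : ℝ}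

lemma frep_le_one (ha : a ^ α ≤ 1) {R : ℝ} (hR : R ≤ 1) : frep α R a ≤ 1 := by
  unfold frep
  nlinarith

lemma frep_monotone (ha : a ^ α ≤ 1) : Monotone (frep α · a) := by
  intro R S h
  simp only [frep]
  nlinarith

end frep

/-- The paper's `R_{i+1}` as a function of `R'_i`. -/
def postSale (w Λ q R' : ℝ) : ℝ := if 0 < dem Λ q R' then (1 - w) * R' + w else R'

section postSale

variable {w Λ q : ℝ}

lemma rep_succ (α : ℝ) (A : ℕ → ℝ) (R1 : ℝ) (i : ℕ) :
    rep α w Λ q A R1 (i + 1) = postSale w Λ q (frep α (rep α w Λ q A R1 i) (A i)) :=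
  rfl

lemma postSale_le_one (hw1 : w ≤ 1) {R : ℝ} (hR : R ≤ 1) : postSale w Λ q R ≤ 1 := by
  unfold postSale
  split_ifs
  · nlinarith
  · exact hR

lemma postSale_monotoneOn (hw0 : 0 ≤ w) (hw1 : w ≤ 1) (hΛ : 0 ≤ Λ) (hq : 0 ≤ q) :
    MonotoneOn (postSale w Λ q) (Set.Iic 1) := by
  intro x _ y (hy : y ≤ 1) hxy
  have hdem := dem_monotone hΛ hq hxy
  unfold postSale
  split_ifs with hdx hdy
  · nlinarith
  · exact absurd (hdx.trans_le hdem) hdy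
  · nlinarith
  · exact hxy

end postSale

section rep

variable {α w Λ q : ℝ} {A : ℕ → ℝ}

lemma rep_le_one (hw1 : w ≤ 1) (hA : ∀ i, A i ^ α ≤ 1) {R1 : ℝ} (hR1 : R1 ≤ 1) (i : ℕ) :
    rep α w Λ q A R1 i ≤ 1 := by
  induction i with
  | zero => exact hR1
  | succ i ih =>
    rw [rep_succ]
    exact postSale_le_one hw1 (frep_le_one (hA i) ih)

lemma rep_le_rep (hw0 : 0 ≤ w) (hw1 : w ≤ 1) (hΛ : 0 ≤ Λ) (hq : 0 ≤ q)
    (hA : ∀ i, A i ^ α ≤ 1) {R1 Rhat1 : ℝ} (hle : R1 ≤ Rhat1) (hRhat1 : Rhat1 ≤ 1) (i : ℕ) :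
    rep α w Λ q A R1 i ≤ rep α w Λ q A Rhat1 i := by
  induction i with
  | zero => exact hle
  | succ i ih =>
    rw [rep_succ, rep_succ]
    have hRhat' : frep α (rep α w Λ q A Rhat1 i) (A i) ≤ 1 :=
      frep_le_one (hA i) (rep_le_one hw1 hA hRhat1 i)
    have hfrep := frep_monotone (hA i) ih
    exact postSale_monotoneOn hw0 hw1 hΛ hq (hfrep.trans hRhat') hRhat' hfrep

end rep

theorem full_fill_monotone_in_initial_reputation_general
    (Λ c p cA m u α w L H q : ℝ) (N : ℕ)
    (hΛ : 0 < Λ) (hc : 0 < c) (hcp : c < p)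
    (hm : 0 < m) (hu : 0 ≤ u) (hqdef : q = (u + p) / m)
    (hα : 0 < α) (hw0 : 0 ≤ w) (hw1 : w ≤ 1)
    (hL0 : 0 ≤ L) (hLH : L < H) (hH1 : H ≤ 1)
    (A : ℕ → ℝ) (hA : ∀ i, A i = L ∨ A i = H)
    (R1 Rhat1 : ℝ) (hle : R1 ≤ Rhat1) (hRhat1 : Rhat1 ≤ 1) :
    (∀ i, i + 1 ≤ N →
      rep α w Λ q A R1 i ≤ rep α w Λ q A Rhat1 i ∧
      frep α (rep α w Λ q A R1 i) (A i) ≤ frep α (rep α w Λ q A Rhat1 i) (A i) ∧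
      dem Λ q (frep α (rep α w Λ q A R1 i) (A i)) ≤
        dem Λ q (frep α (rep α w Λ q A Rhat1 i) (A i))) ∧
    profit α w Λ q p c cA A R1 N ≤ profit α w Λ q p c cA A Rhat1 N := by
  have hq : 0 ≤ q := by
    rw [hqdef]
    have := hc.trans hcp
    positivity
  have hAα : ∀ i, A i ^ α ≤ 1 := fun i => by
    rcases hA i with h | h <;> rw [h]
    exacts [Real.rpow_le_one hL0 (by linarith) hα.le, Real.rpow_le_one (by linarith) hH1 hα.le]
  have hrep := rep_le_rep hw0 hw1 hΛ.le hq hAα hle hRhat1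
  have hfrep i := frep_monotone (hAα i) (hrep i)
  have hdem i := dem_monotone hΛ.le hq (hfrep i)
  refine ⟨fun i _ => ⟨hrep i, hfrep i, hdem i⟩, ?_⟩
  unfold profit
  gcongr with i
  exact hdem i

/-- Monotonicity of the full-fill trajectory and total profit in the initial
reputation. -/
theorem full_fill_monotone_in_initial_reputation
    (Λ c p cA m u α w L H q : ℝ) (N : ℕ)
    (hΛ : 0 < Λ) (hc : 0 < c) (hcp : c < p) (hcA : 0 ≤ cA)
    (hm : 0 < m) (hu : 0 ≤ u) (hqdef : q = (u + p) / m) (hq1 : q < 1)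
    (hα : 0 < α) (hw0 : 0 ≤ w) (hw1 : w ≤ 1)
    (hL0 : 0 ≤ L) (hLH : L < H) (hH1 : H ≤ 1)
    (A : ℕ → ℝ) (hA : ∀ i, A i = L ∨ A i = H)
    (R1 Rhat1 : ℝ) (hR10 : 0 ≤ R1) (hle : R1 ≤ Rhat1) (hRhat1 : Rhat1 ≤ 1) :
    (∀ i, i + 1 ≤ N →
      rep α w Λ q A R1 i ≤ rep α w Λ q A Rhat1 i ∧
      frep α (rep α w Λ q A R1 i) (A i) ≤ frep α (rep α w Λ q A Rhat1 i) (A i) ∧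
      dem Λ q (frep α (rep α w Λ q A R1 i) (A i)) ≤
        dem Λ q (frep α (rep α w Λ q A Rhat1 i) (A i))) ∧
    profit α w Λ q p c cA A R1 N ≤ profit α w Λ q p c cA A Rhat1 N :=
  full_fill_monotone_in_initial_reputation_general Λ c p cA m u α w L H q N hΛ hc hcp hm hu hqdef hα
    hw0 hw1 hL0 hLH hH1 A hA R1 Rhat1 hle hRhat1
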